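/- There exists a unique formal power series A over ℚ with constant coefficient 0 and linear coefficient 1 satisfying A''(X) = exp(A(X)), i.e. the second formal derivative of A equals the substitution of A into the exponential series; moreover, for every n, n!·(coeff n A) is an integer (these integers 1, 1, 1, 2, 5, 16, 61, 272, 1385, ... are the Euler zigzag numbers, with A'' having exponential generating function (1 + sin x)/cos x). -/

import Mathlib

/-- Substitution of the power series `a` (which should have zero constant term) into the
power series `f`, i.e. `f(a)`.  Since `a` has zero constant term, the coefficient of `X^n`
in `f(a)` is the finite sum `∑_{k=0}^{n} (coeff k f) * (coeff n (a^k))`. -/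
noncomputable def PowerSeries.substQ (a f : PowerSeries ℚ) : PowerSeries ℚ :=
  PowerSeries.mk fun n =>
    ∑ k ∈ Finset.range (n + 1), (PowerSeries.coeff (R := ℚ) k f) * (PowerSeries.coeff (R := ℚ) n (a ^ k))

open PowerSeries Finset

private lemma zz_coeff_pow_congr (f g : PowerSeries ℚ) (n : ℕ)
    (h : ∀ i ≤ n, coeff (R := ℚ) i f = coeff (R := ℚ) i g) (k : ℕ) :
    ∀ i ≤ n, coeff (R := ℚ) i (f ^ k) = coeff (R := ℚ) i (g ^ k) := by
  induction k with
  | zero => intro i _; simp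
  | succ k ih =>
    intro i hi
    rw [pow_succ, pow_succ, coeff_mul, coeff_mul]
    refine Finset.sum_congr rfl fun p hp => ?_
    rw [Finset.HasAntidiagonal.mem_antidiagonal] at hp
    rw [ih p.1 (le_trans (by omega) hi), h p.2 (le_trans (by omega) hi)]

/-- Coefficient-wise form of the ODE `A'' = exp(A)`. -/
private lemma zz_ode_coeff (A : PowerSeries ℚ)
    (hd : PowerSeries.derivative ℚ (PowerSeries.derivative ℚ A) =
      PowerSeries.substQ A (PowerSeries.exp ℚ)) (n : ℕ) :
    coeff (R := ℚ) (n + 2) A * ((n + 2) * (n + 1)) =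
      ∑ k ∈ Finset.range (n + 1), (1 / (k.factorial : ℚ)) * coeff (R := ℚ) n (A ^ k) := by
  have h := congrArg (coeff (R := ℚ) n) hd
  rw [coeff_derivative, coeff_derivative] at h
  rw [PowerSeries.substQ, coeff_mk] at h
  have : ∀ k : ℕ, (coeff (R := ℚ) k (PowerSeries.exp ℚ)) = 1 / (k.factorial : ℚ) := by
    intro k; rw [PowerSeries.coeff_exp]; simp [Algebra.algebraMap_self]
  simp only [this] at h
  push_cast at h ⊢
  linarith [h]

private def zzS : Subring ℚ := (Int.castRingHom ℚ).range

private lemma zzS_mem (x : ℚ) : x ∈ zzS ↔ ∃ m : ℤ, x = (m : ℚ) := by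
  constructor
  · rintro ⟨m, rfl⟩; exact ⟨m, rfl⟩
  · rintro ⟨m, rfl⟩; exact ⟨m, rfl⟩

private lemma zzS_nat (n : ℕ) : (n : ℚ) ∈ zzS := ⟨(n : ℤ), by simp⟩

/-- Integrality of `n!/k! * [x^n] A^k` given integrality of `i! * a i` for `i ≤ N`. -/
private lemma zz_cInt (a : ℕ → ℚ) (ha0 : a 0 = 0) (N : ℕ)
    (hb : ∀ i ≤ N, ((i.factorial : ℚ) * a i) ∈ zzS) :
    ∀ n, n ≤ N → ∀ k, ((n.factorial : ℚ) / (k.factorial : ℚ) *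
      coeff (R := ℚ) n ((PowerSeries.mk a) ^ k)) ∈ zzS := by
  intro n
  induction n using Nat.strong_induction_on with
  | _ n ih =>
    match n with
    | 0 =>
      intro _ k
      cases k with
      | zero => simpa using zzS.one_mem
      | succ k =>
        have : coeff (R := ℚ) 0 ((PowerSeries.mk a) ^ (k + 1)) = 0 := by
          rw [coeff_zero_eq_constantCoeff, map_pow]
          simp [constantCoeff_mk, ha0]
        rw [this, mul_zero]; exact zzS.zero_mem
    | (n + 1) =>
      intro hn k
      cases k with
      | zero =>
        have : coeff (R := ℚ) (n + 1) ((PowerSeries.mk a) ^ 0) = 0 := by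
          simp [coeff_one]
        rw [this, mul_zero]; exact zzS.zero_mem
      | succ k =>
        -- use the derivative to get a recursion
        have hder : coeff (R := ℚ) (n + 1) ((PowerSeries.mk a) ^ (k + 1)) * ((n : ℚ) + 1) =
            ((k : ℚ) + 1) * ∑ p ∈ Finset.HasAntidiagonal.antidiagonal n,
              coeff (R := ℚ) p.1 ((PowerSeries.mk a) ^ k) * (a (p.2 + 1) * ((p.2 : ℚ) + 1)) := by
          have h1 : coeff (R := ℚ) n (PowerSeries.derivative ℚ ((PowerSeries.mk a) ^ (k + 1))) =
              coeff (R := ℚ) (n + 1) ((PowerSeries.mk a) ^ (k + 1)) * ((n : ℚ) + 1) := by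
            rw [coeff_derivative]
            try push_cast
            try ring
          have h2 : PowerSeries.derivative ℚ ((PowerSeries.mk a) ^ (k + 1)) =
              (k + 1) • ((PowerSeries.mk a) ^ k * PowerSeries.derivative ℚ (PowerSeries.mk a)) := by
            rw [Derivation.leibniz_pow]
            simp [smul_eq_mul]
          rw [h2] at h1
          rw [map_nsmul, coeff_mul] at h1
          rw [← h1]
          rw [nsmul_eq_mul]
          push_cast
          congr 1
          refine Finset.sum_congr rfl fun p _ => ?_
          rw [coeff_derivative, coeff_mk]
          try push_cast
          try ring
        have hn1 : ((n : ℚ) + 1) ≠ 0 := by positivity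
        have key : ((n + 1).factorial : ℚ) / ((k + 1).factorial : ℚ) *
            coeff (R := ℚ) (n + 1) ((PowerSeries.mk a) ^ (k + 1)) =
            ∑ p ∈ Finset.HasAntidiagonal.antidiagonal n, (n.choose p.1 : ℚ) *
              ((p.1.factorial : ℚ) / (k.factorial : ℚ) * coeff (R := ℚ) p.1 ((PowerSeries.mk a) ^ k)) *
              (((p.2 + 1).factorial : ℚ) * a (p.2 + 1)) := by
          refine mul_left_cancel₀ hn1 ?_
          rw [Finset.mul_sum]
          calc ((n : ℚ) + 1) * (((n + 1).factorial : ℚ) / ((k + 1).factorial : ℚ) *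
                coeff (R := ℚ) (n + 1) ((PowerSeries.mk a) ^ (k + 1)))
              = ((n + 1).factorial : ℚ) / ((k + 1).factorial : ℚ) *
                (coeff (R := ℚ) (n + 1) ((PowerSeries.mk a) ^ (k + 1)) * ((n : ℚ) + 1)) := by ring
            _ = ((n + 1).factorial : ℚ) / ((k + 1).factorial : ℚ) *
                (((k : ℚ) + 1) * ∑ p ∈ Finset.HasAntidiagonal.antidiagonal n,
                  coeff (R := ℚ) p.1 ((PowerSeries.mk a) ^ k) * (a (p.2 + 1) * ((p.2 : ℚ) + 1))) := by
                rw [hder]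
            _ = ∑ p ∈ Finset.HasAntidiagonal.antidiagonal n, ((n + 1).factorial : ℚ) / ((k + 1).factorial : ℚ) *
                (((k : ℚ) + 1) *
                  (coeff (R := ℚ) p.1 ((PowerSeries.mk a) ^ k) * (a (p.2 + 1) * ((p.2 : ℚ) + 1)))) := by
                rw [Finset.mul_sum, Finset.mul_sum]
            _ = _ := by
                refine Finset.sum_congr rfl fun p hp => ?_
                rw [Finset.HasAntidiagonal.mem_antidiagonal] at hp
                have hp1 : p.1 ≤ n := by omega
                have hchoose : (n.choose p.1 : ℚ) = (n.factorial : ℚ) /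
                    ((p.1.factorial : ℚ) * (p.2.factorial : ℚ)) := by
                  rw [Nat.cast_choose ℚ hp1, show n - p.1 = p.2 from by omega]
                rw [hchoose]
                have e1 : ((n + 1).factorial : ℚ) = ((n : ℚ) + 1) * (n.factorial : ℚ) := by
                  rw [Nat.factorial_succ]; push_cast; ring
                have e2 : ((k + 1).factorial : ℚ) = ((k : ℚ) + 1) * (k.factorial : ℚ) := by
                  rw [Nat.factorial_succ]; push_cast; ring
                have e3 : ((p.2 + 1).factorial : ℚ) = ((p.2 : ℚ) + 1) * (p.2.factorial : ℚ) := by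
                  rw [Nat.factorial_succ]; push_cast; ring
                rw [e1, e2, e3]
                have f1 : (n.factorial : ℚ) ≠ 0 := Nat.cast_ne_zero.mpr n.factorial_ne_zero
                have f2 : (k.factorial : ℚ) ≠ 0 := Nat.cast_ne_zero.mpr k.factorial_ne_zero
                have f3 : (p.1.factorial : ℚ) ≠ 0 := Nat.cast_ne_zero.mpr p.1.factorial_ne_zero
                have f4 : (p.2.factorial : ℚ) ≠ 0 := Nat.cast_ne_zero.mpr p.2.factorial_ne_zero
                have hk1 : ((k : ℚ) + 1) ≠ 0 := by positivity
                field_simp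
        rw [key]
        refine zzS.sum_mem fun p hp => ?_
        rw [Finset.HasAntidiagonal.mem_antidiagonal] at hp
        exact zzS.mul_mem (zzS.mul_mem (zzS_nat _)
          (ih p.1 (by omega) (by omega) k)) (hb (p.2 + 1) (by omega))

/-- Integrality for any solution of the ODE. -/
private lemma zz_int (A : PowerSeries ℚ)
    (h0 : PowerSeries.coeff (R := ℚ) 0 A = 0)
    (h1 : PowerSeries.coeff (R := ℚ) 1 A = 1)
    (hd : PowerSeries.derivative ℚ (PowerSeries.derivative ℚ A) =
      PowerSeries.substQ A (PowerSeries.exp ℚ)) :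
    ∀ n : ℕ, ((n.factorial : ℚ) * PowerSeries.coeff (R := ℚ) n A) ∈ zzS := by
  intro n
  induction n using Nat.strong_induction_on with
  | _ n ih =>
    match n with
    | 0 => rw [h0, mul_zero]; exact zzS.zero_mem
    | 1 =>
      rw [h1]
      simpa using zzS.one_mem
    | (n + 2) =>
      have hode := zz_ode_coeff A hd n
      have hmkA : PowerSeries.mk (fun i => coeff (R := ℚ) i A) = A := by
        ext i; rw [coeff_mk]
      have key : (((n + 2).factorial : ℚ)) * coeff (R := ℚ) (n + 2) A =
          ∑ k ∈ Finset.range (n + 1), (n.factorial : ℚ) / (k.factorial : ℚ) *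
            coeff (R := ℚ) n (A ^ k) := by
        have e : (((n + 2).factorial : ℚ)) = (n.factorial : ℚ) * ((n + 2 : ℚ) * (n + 1 : ℚ)) := by
          rw [Nat.factorial_succ, Nat.factorial_succ]; push_cast; ring
        rw [e, mul_assoc, mul_comm ((n + 2 : ℚ) * (n + 1 : ℚ)) (coeff (R := ℚ) (n + 2) A), hode,
          Finset.mul_sum]
        refine Finset.sum_congr rfl fun k _ => ?_
        ring
      rw [key]
      refine zzS.sum_mem fun k _ => ?_
      have := zz_cInt (fun i => coeff (R := ℚ) i A) h0 n
        (fun i hi => ih i (by omega)) n le_rfl k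
      rwa [hmkA] at this

private noncomputable def zig : ℕ → ℚ
  | 0 => 0
  | 1 => 1
  | (n + 2) => (∑ k ∈ Finset.range (n + 1), (1 / (k.factorial : ℚ)) *
      PowerSeries.coeff (R := ℚ) n ((PowerSeries.mk (fun i => if h : i < n + 2 then zig i else 0)) ^ k)) /
      ((n + 1) * (n + 2))

private noncomputable def zigA : PowerSeries ℚ := PowerSeries.mk zig

private lemma zig0 : PowerSeries.coeff (R := ℚ) 0 zigA = 0 := by
  simp [zigA, coeff_mk, zig]

private lemma zig1 : PowerSeries.coeff (R := ℚ) 1 zigA = 1 := by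
  simp [zigA, coeff_mk, zig]

private lemma zig_ode :
    PowerSeries.derivative ℚ (PowerSeries.derivative ℚ zigA) =
      PowerSeries.substQ zigA (PowerSeries.exp ℚ) := by
  ext n
  rw [coeff_derivative, coeff_derivative, PowerSeries.substQ, coeff_mk]
  have hexp : ∀ k : ℕ, coeff (R := ℚ) k (PowerSeries.exp ℚ) = 1 / (k.factorial : ℚ) := fun k => by
    rw [PowerSeries.coeff_exp]; simp
  simp only [hexp]
  have hagree : ∀ k, coeff (R := ℚ) n (zigA ^ k) =
      coeff (R := ℚ) n ((PowerSeries.mk (fun i => if h : i < n + 2 then zig i else 0)) ^ k) := by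
    intro k
    refine zz_coeff_pow_congr _ _ n (fun i hi => ?_) k n le_rfl
    simp only [zigA, coeff_mk]
    rw [dif_pos (by omega : i < n + 2)]
  simp only [hagree]
  have hz : coeff (R := ℚ) (n + 1 + 1) zigA = zig (n + 2) := by simp [zigA, coeff_mk]
  rw [hz, zig]
  have h1 : ((n : ℚ) + 1) ≠ 0 := by positivity
  have h2 : ((n : ℚ) + 2) ≠ 0 := by positivity
  push_cast
  field_simp
  ring

private lemma zz_unique (A B : PowerSeries ℚ)
    (h0A : PowerSeries.coeff (R := ℚ) 0 A = 0) (h1A : PowerSeries.coeff (R := ℚ) 1 A = 1)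
    (hdA : PowerSeries.derivative ℚ (PowerSeries.derivative ℚ A) =
      PowerSeries.substQ A (PowerSeries.exp ℚ))
    (h0B : PowerSeries.coeff (R := ℚ) 0 B = 0) (h1B : PowerSeries.coeff (R := ℚ) 1 B = 1)
    (hdB : PowerSeries.derivative ℚ (PowerSeries.derivative ℚ B) =
      PowerSeries.substQ B (PowerSeries.exp ℚ)) : A = B := by
  ext n
  induction n using Nat.strong_induction_on with
  | _ n ih =>
    match n with
    | 0 => rw [h0A, h0B]
    | 1 => rw [h1A, h1B]
    | (n + 2) =>
      have hA := zz_ode_coeff A hdA n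
      have hB := zz_ode_coeff B hdB n
      have hs : ∀ k, coeff (R := ℚ) n (A ^ k) = coeff (R := ℚ) n (B ^ k) := fun k =>
        zz_coeff_pow_congr A B n (fun i hi => ih i (by omega)) k n le_rfl
      have hnz : (((n : ℚ) + 2) * ((n : ℚ) + 1)) ≠ 0 := by positivity
      have heq : coeff (R := ℚ) (n + 2) A * (((n : ℚ) + 2) * ((n : ℚ) + 1)) =
          coeff (R := ℚ) (n + 2) B * (((n : ℚ) + 2) * ((n : ℚ) + 1)) := by
        push_cast at hA hB
        rw [hA, hB]
        exact Finset.sum_congr rfl fun k _ => by rw [hs k]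
      exact mul_right_cancel₀ hnz heq

/-- There is a unique formal power series `A` over `ℚ` with zero constant coefficient and
linear coefficient `1` satisfying `A'' = exp(A)`; moreover `n! * (coeff n A)` is always an
integer (the Euler zigzag numbers `1, 1, 1, 2, 5, 16, 61, 272, 1385, ...`, with `A''`
having exponential generating function `(1 + sin x)/cos x`). -/
theorem euler_zigzag_exp_eigen_sequence :
    (∃! A : PowerSeries ℚ,
        PowerSeries.coeff (R := ℚ) 0 A = 0 ∧
        PowerSeries.coeff (R := ℚ) 1 A = 1 ∧
        PowerSeries.derivative ℚ (PowerSeries.derivative ℚ A) =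
          PowerSeries.substQ A (PowerSeries.exp ℚ)) ∧
    ∀ A : PowerSeries ℚ,
      PowerSeries.coeff (R := ℚ) 0 A = 0 →
      PowerSeries.coeff (R := ℚ) 1 A = 1 →
      PowerSeries.derivative ℚ (PowerSeries.derivative ℚ A) =
        PowerSeries.substQ A (PowerSeries.exp ℚ) →
      ∀ n : ℕ, ∃ m : ℤ, (n.factorial : ℚ) * PowerSeries.coeff (R := ℚ) n A = (m : ℚ) := by
  constructor
  · exact ⟨zigA, ⟨zig0, zig1, zig_ode⟩,
      fun B hB => zz_unique B zigA hB.1 hB.2.1 hB.2.2 zig0 zig1 zig_ode⟩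
  · intro A h0 h1 hd n
    rcases zz_int A h0 h1 hd n with ⟨m, hm⟩
    exact ⟨m, hm.symm⟩
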